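/- arXiv:1407.3286 — 4 statements merged into one kernel-verified Lean document; each statement's English description precedes it below -/
import Mathlib

section
/- The Marabout failure detector is at least as strong as the perfect failure detector with respect to the solvability relation: ℳ ≽ˢ 𝒫, i.e., every time-free problem that is solvable using the perfect failure detector 𝒫 is also solvable using the Marabout failure detector ℳ. -/
namespace FDT

open Classical

/-- A failure pattern: a monotone assignment of crashed sets to times. -/
structure FailurePattern (Proc : Type) where
  F : ℕ → Set Proc
  mono : ∀ t, F t ⊆ F (t + 1)

variable {Proc State Msg PState : Type}

/-- The set of processes live at time `t`. -/
def live (F : FailurePattern Proc) (t : ℕ) : Set Proc := (F.F t)ᶜ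

/-- The set of correct processes: those that are always live. -/
def correctS (F : FailurePattern Proc) : Set Proc := {p | ∀ t, p ∉ F.F t}

/-- The set of faulty processes. -/
def faultyS (F : FailurePattern Proc) : Set Proc := (correctS F)ᶜ

/-- Marabout failure detector: every live process always sees exactly the faulty set. -/
def Marabout (F : FailurePattern Proc) : Set (Proc → ℕ → Set Proc) :=
  {H | ∀ t : ℕ, ∀ p ∉ F.F t, H p t = faultyS F}

/-- The perfect failure detector: strong completeness and strong accuracy. -/
def Perfect (F : FailurePattern Proc) : Set (Proc → ℕ → Set Proc) :=
  {H | (∀ q ∈ faultyS F, ∀ p ∈ correctS F, ∃ t', ∀ t > t', q ∈ H p t) ∧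
       (∀ t : ℕ, ∀ p ∉ F.F t, ∀ q, q ∉ F.F t → q ∉ H p t)}

/-- The failure detector `𝒫_k`: k-completeness and k-accuracy. -/
def Pk (k : ℕ) (F : FailurePattern Proc) : Set (Proc → ℕ → Set Proc) :=
  {H | (∀ p q : Proc, q ∉ F.F k → q ∈ faultyS F → p ∈ correctS F →
          ∃ t', ∀ t > t', q ∈ H p t) ∧
       (∀ (p q : Proc) (t : ℕ), q ∉ F.F k → q ∉ F.F t → q ∉ H p t)}

/-- `F` is an initial crash scenario: all faulty processes crash at time 0. -/
def IsInitialCrashScenario (F : FailurePattern Proc) : Prop :=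
  ∀ t, F.F t = faultyS F

/-- The initial crash scenario `F⁰` associated with `F`. -/
def initialScenario (F : FailurePattern Proc) : FailurePattern Proc :=
  ⟨fun _ => faultyS F, fun _ => subset_rfl⟩

/-- The shifted failure pattern `t ↦ F(t+1)`. -/
def shiftPattern (F : FailurePattern Proc) : FailurePattern Proc :=
  ⟨fun t => F.F (t + 1), fun t => F.mono (t + 1)⟩

/-- A step `(p, s, m, d, s', m')` of process `p`. -/
structure Step (Proc State Msg : Type) where
  proc : Proc
  st : State
  recv : Option (Proc × Msg)
  fd : Set Proc
  st' : State
  send : Option (Proc × Msg)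

/-- An algorithm: state sets, nonempty initial state sets, and a deterministic
transition relation given as the set of allowed steps. -/
structure Algorithm (Proc State Msg : Type) where
  Q : Proc → Set State
  init : Proc → Set State
  init_sub : ∀ p, init p ⊆ Q p
  init_nonempty : ∀ p, (init p).Nonempty
  allowed : Set (Step Proc State Msg)
  allowed_st : ∀ s ∈ allowed, s.st ∈ Q s.proc ∧ s.st' ∈ Q s.proc
  det : ∀ s ∈ allowed, ∀ s' ∈ allowed,
    s.proc = s'.proc → s.st = s'.st → s.recv = s'.recv → s.fd = s'.fd →
    s.st' = s'.st' ∧ s.send = s'.send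

/-- `R = ⟨F, H, I, Φ, T⟩` is a valid run of algorithm `A` using failure detector `D`. -/
def ValidRun (A : Algorithm Proc State Msg)
    (D : FailurePattern Proc → Set (Proc → ℕ → Set Proc))
    (F : FailurePattern Proc) (H : Proc → ℕ → Set Proc) (I : Proc → State)
    (Φ : ℕ → Step Proc State Msg) (T : ℕ → ℕ) : Prop :=
  -- the time sequence is strictly increasing
  StrictMono T ∧
  -- the history belongs to the detector
  H ∈ D F ∧
  -- the initial configuration is made of initial states
  (∀ p, I p ∈ A.init p) ∧
  -- correct processes take infinitely many steps
  (∀ p ∈ correctS F, ∀ n : ℕ, ∃ ℓ ≥ n, (Φ ℓ).proc = p) ∧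
  -- all steps are allowed by the algorithm
  (∀ ℓ, Φ ℓ ∈ A.allowed) ∧
  -- a process taking a step is live at that time
  (∀ ℓ, (Φ ℓ).proc ∉ F.F (T ℓ)) ∧
  -- the failure detector output is the history value at that time
  (∀ ℓ, (Φ ℓ).fd = H (Φ ℓ).proc (T ℓ)) ∧
  -- no spurious messages
  (∀ ℓ q m, (Φ ℓ).recv = some (q, m) →
     ∃ k < ℓ, (Φ k).proc = q ∧ (Φ k).send = some ((Φ ℓ).proc, m)) ∧
  -- reliable links: each sent message received at most once; exactly once at correct processes
  (∀ ℓ q m, (Φ ℓ).send = some (q, m) →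
     (∀ k k', ℓ < k → ℓ < k' → (Φ k).proc = q → (Φ k).recv = some ((Φ ℓ).proc, m) →
        (Φ k').proc = q → (Φ k').recv = some ((Φ ℓ).proc, m) → k = k') ∧
     (q ∈ correctS F → ∃ k > ℓ, (Φ k).proc = q ∧ (Φ k).recv = some ((Φ ℓ).proc, m))) ∧
  -- the first step of a process starts in its initial state
  (∀ ℓ, (∀ k < ℓ, (Φ k).proc ≠ (Φ ℓ).proc) → (Φ ℓ).st = I (Φ ℓ).proc) ∧
  -- the state does not change between consecutive steps of a process
  (∀ ℓ k, ℓ < k → (Φ k).proc = (Φ ℓ).proc →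
     (∀ j, ℓ < j → j < k → (Φ j).proc ≠ (Φ ℓ).proc) → (Φ k).st = (Φ ℓ).st')

/-- `γ(I,Φ,ℓ)`: the configuration (process states) after the first `ℓ` steps of `Φ`. -/
noncomputable def configAt (I : Proc → State) (Φ : ℕ → Step Proc State Msg) :
    ℕ → Proc → State
  | 0 => I
  | (ℓ + 1) => fun p =>
      if (Φ ℓ).proc = p then (Φ ℓ).st' else configAt I Φ ℓ p

/-- `γ_i(I,Φ,ℓ)`: the state of process `p` after its first `ℓ` own steps in `Φ`
(constant once `p` takes no more steps). -/
noncomputable def procStateAfter (I : Proc → State) (Φ : ℕ → Step Proc State Msg)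
    (p : Proc) : ℕ → State
  | 0 => I p
  | (ℓ + 1) =>
      if h : ∃ k, (Φ k).proc = p ∧ {j | j < k ∧ (Φ j).proc = p}.ncard = ℓ
      then (Φ h.choose).st'
      else procStateAfter I Φ p ℓ

/-- `Φ, T` are obtained from `Φt, Tt` by deleting exactly the entries whose
process lies in `bad`. -/
def IsDeletion (bad : Set Proc) (Φt : ℕ → Step Proc State Msg) (Tt : ℕ → ℕ)
    (Φ : ℕ → Step Proc State Msg) (T : ℕ → ℕ) : Prop :=
  ∃ e : ℕ → ℕ, StrictMono e ∧
    (∀ ℓ, (Φt (e ℓ)).proc ∉ bad) ∧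
    (∀ n, (Φt n).proc ∉ bad → ∃ ℓ, e ℓ = n) ∧
    (∀ ℓ, Φ ℓ = Φt (e ℓ)) ∧ (∀ ℓ, T ℓ = Tt (e ℓ))

/-- Index `n` is the first step of its process in schedule `Φ`. -/
def IsFirstStep (Φ : ℕ → Step Proc State Msg) (n : ℕ) : Prop :=
  ∀ j < n, (Φ j).proc ≠ (Φ n).proc

/-- `Φ, T` are obtained from `Φt, Tt` by deleting, for each process, the entry of its
first step. -/
def IsFirstStepDeletion (Φt : ℕ → Step Proc State Msg) (Tt : ℕ → ℕ)
    (Φ : ℕ → Step Proc State Msg) (T : ℕ → ℕ) : Prop :=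
  ∃ e : ℕ → ℕ, StrictMono e ∧
    (∀ ℓ, ¬ IsFirstStep Φt (e ℓ)) ∧
    (∀ n, ¬ IsFirstStep Φt n → ∃ ℓ, e ℓ = n) ∧
    (∀ ℓ, Φ ℓ = Φt (e ℓ)) ∧ (∀ ℓ, T ℓ = Tt (e ℓ))

/-- Data for the Stall-on-Suspect transformation of `A`: the fresh stall states
`S†_i` (disjoint from `Q_i`) together with the bijections `stall_i : Q̂_i → S†_i`. -/
structure SoSData (A : Algorithm Proc State Msg) where
  Sd : Proc → Set State
  disj : ∀ p, Disjoint (Sd p) (A.Q p)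
  stall : Proc → State → State
  stall_maps : ∀ p, ∀ q ∈ A.init p, stall p q ∈ Sd p
  stall_inj : ∀ p, Set.InjOn (stall p) (A.init p)
  stall_surj : ∀ p, Sd p ⊆ stall p '' (A.init p)

/-- The Stall-on-Suspect transformation `Ã = 𝔉_SoS(A)`. -/
def SoSAlg (A : Algorithm Proc State Msg) (D : SoSData A) :
    Algorithm Proc State Msg where
  Q p := A.Q p ∪ D.Sd p
  init := A.init
  init_sub p := (A.init_sub p).trans Set.subset_union_left
  init_nonempty := A.init_nonempty
  allowed := {s | (s ∈ A.allowed ∧ ¬(s.st ∈ A.init s.proc ∧ s.proc ∈ s.fd)) ∨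
      (s.st ∈ A.init s.proc ∧ s.proc ∈ s.fd ∧ s.st' = D.stall s.proc s.st ∧
        s.recv = none ∧ s.send = none) ∨
      (s.st ∈ D.Sd s.proc ∧ s.st' = s.st ∧ s.recv = none ∧ s.send = none)}
  allowed_st := by
    rintro s (⟨hA, -⟩ | ⟨h1, h2, h3, -⟩ | ⟨h1, h2, -⟩)
    · exact ⟨Set.mem_union_left _ (A.allowed_st s hA).1,
        Set.mem_union_left _ (A.allowed_st s hA).2⟩
    · exact ⟨Set.mem_union_left _ (A.init_sub _ h1),
        Set.mem_union_right _ (h3 ▸ D.stall_maps _ _ h1)⟩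
    · exact ⟨Set.mem_union_right _ h1, Set.mem_union_right _ (h2 ▸ h1)⟩
  det := by
    rintro s hs s' hs' hproc hst hrecv hfd
    rcases hs with ⟨hA, hn⟩ | ⟨h1, h2, h3, h4, h5⟩ | ⟨h1, h2, h3, h4⟩ <;>
      rcases hs' with ⟨hA', hn'⟩ | ⟨h1', h2', h3', h4', h5'⟩ | ⟨h1', h2', h3', h4'⟩
    · exact A.det s hA s' hA' hproc hst hrecv hfd
    · exact absurd ⟨by rw [hproc, hst]; exact h1', by rw [hproc, hfd]; exact h2'⟩ hn
    · exact absurd ((A.allowed_st s hA).1)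
        (Set.disjoint_left.mp (D.disj s.proc) (by rw [hproc, hst]; exact h1'))
    · exact absurd ⟨by rw [← hproc, ← hst]; exact h1, by rw [← hproc, ← hfd]; exact h2⟩ hn'
    · refine ⟨?_, by rw [h5, h5']⟩
      rw [h3, h3', hproc, hst]
    · exact absurd (A.init_sub _ h1)
        (Set.disjoint_left.mp (D.disj s.proc) (by rw [hproc, hst]; exact h1'))
    · exact absurd ((A.allowed_st s' hA').1)
        (Set.disjoint_left.mp (D.disj s'.proc) (by rw [← hproc, ← hst]; exact h1))
    · exact absurd (A.init_sub _ h1')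
        (Set.disjoint_left.mp (D.disj s'.proc) (by rw [← hproc, ← hst]; exact h1))
    · exact ⟨by rw [h2, h2', hst], by rw [h4, h4']⟩

/-- Data for the Delay-a-Step transformation of `A`: fresh initial states `S⋆_i`
(disjoint from `Q_i`) together with the bijections `delay_i : S⋆_i → Q̂_i`. -/
structure DaSData (A : Algorithm Proc State Msg) where
  Ss : Proc → Set State
  disj : ∀ p, Disjoint (Ss p) (A.Q p)
  delay : Proc → State → State
  delay_maps : ∀ p, ∀ s ∈ Ss p, delay p s ∈ A.init p
  delay_inj : ∀ p, Set.InjOn (delay p) (Ss p)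
  delay_surj : ∀ p, A.init p ⊆ delay p '' (Ss p)

/-- The Delay-a-Step transformation `Ã = 𝔉_DaS(A)`. -/
def DaSAlg (A : Algorithm Proc State Msg) (D : DaSData A) :
    Algorithm Proc State Msg where
  Q p := A.Q p ∪ D.Ss p
  init p := D.Ss p
  init_sub p := Set.subset_union_right
  init_nonempty p := by
    obtain ⟨q, hq⟩ := A.init_nonempty p
    obtain ⟨s, hs, -⟩ := D.delay_surj p hq
    exact ⟨s, hs⟩
  allowed := {s | s ∈ A.allowed ∨
      (s.st ∈ D.Ss s.proc ∧ s.st' = D.delay s.proc s.st ∧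
        s.recv = none ∧ s.send = none)}
  allowed_st := by
    rintro s (hA | ⟨h1, h2, -⟩)
    · exact ⟨Set.mem_union_left _ (A.allowed_st s hA).1,
        Set.mem_union_left _ (A.allowed_st s hA).2⟩
    · exact ⟨Set.mem_union_right _ h1,
        Set.mem_union_left _ (A.init_sub _ (h2 ▸ D.delay_maps _ _ h1))⟩
  det := by
    rintro s hs s' hs' hproc hst hrecv hfd
    rcases hs with hA | ⟨h1, h2, h3, h4⟩ <;> rcases hs' with hA' | ⟨h1', h2', h3', h4'⟩
    · exact A.det s hA s' hA' hproc hst hrecv hfd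
    · exact absurd ((A.allowed_st s hA).1)
        (Set.disjoint_left.mp (D.disj s.proc) (by rw [hproc, hst]; exact h1'))
    · exact absurd ((A.allowed_st s' hA').1)
        (Set.disjoint_left.mp (D.disj s'.proc) (by rw [← hproc, ← hst]; exact h1))
    · exact ⟨by rw [h2, h2', hproc, hst], by rw [h4, h4']⟩

/-- One stuttering insertion: `w'` is obtained from `w` by inserting between the
`n`-th and `(n+1)`-st configurations a configuration agreeing componentwise with
one of the two. -/
def Stutter1 (w w' : ℕ → Proc → PState) : Prop :=
  ∃ n : ℕ, (∀ k ≤ n, w' k = w k) ∧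
    (∀ p, w' (n + 1) p = w n p ∨ w' (n + 1) p = w (n + 1) p) ∧
    (∀ k, n < k → w' (k + 1) = w k)

/-- `w ⊑ w'`: `w'` is obtained from `w` by finitely many stuttering insertions. -/
def Stutter (w w' : ℕ → Proc → PState) : Prop :=
  Relation.ReflTransGen Stutter1 w w'

/-- A time-free problem: a predicate on problem-configuration sequences and
failure patterns, satisfying crash time independence and finite stuttering. -/
structure TimeFreeProblem (Proc PState : Type) (initP : Set PState) where
  pred : (ℕ → Proc → PState) → FailurePattern Proc → Prop
  crashIndep : ∀ (w : ℕ → Proc → PState) (F F' : FailurePattern Proc),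
    (∀ p, w 0 p ∈ initP) → correctS F = correctS F' → (pred w F ↔ pred w F')
  stutterInv : ∀ (w w' : ℕ → Proc → PState) (F : FailurePattern Proc),
    (∀ p, w 0 p ∈ initP) → Stutter w w' → (pred w F ↔ pred w' F)

/-- `V` is an interpretation of the states of `A`: each `V_i` maps `Q_i` onto the
problem states, and `Q̂_i` onto the initial problem states `initP`. -/
def IsInterp (A : Algorithm Proc State Msg) (initP : Set PState)
    (V : Proc → State → PState) : Prop :=
  (∀ p, V p '' A.Q p = Set.univ) ∧ (∀ p, V p '' A.init p = initP)

/-- The interpreted run of a run with initial configuration `I` and schedule `Φ`. -/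
noncomputable def interpRun (V : Proc → State → PState) (I : Proc → State)
    (Φ : ℕ → Step Proc State Msg) : ℕ → Proc → PState :=
  fun ℓ p => V p (configAt I Φ ℓ p)

/-- Algorithm `A` solves problem `P` using failure detector `D`. -/
noncomputable def Solves (A : Algorithm Proc State Msg)
    (D : FailurePattern Proc → Set (Proc → ℕ → Set Proc))
    (P : (ℕ → Proc → PState) → FailurePattern Proc → Prop)
    (initP : Set PState) : Prop :=
  ∃ V : Proc → State → PState, IsInterp A initP V ∧
    ∀ (F : FailurePattern Proc) (H : Proc → ℕ → Set Proc) (I : Proc → State)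
      (Φ : ℕ → Step Proc State Msg) (T : ℕ → ℕ),
      ValidRun A D F H I Φ T → P (interpRun V I Φ) F

/-- Problem `P` is solvable using failure detector `D`. -/
noncomputable def SolvableWith (Proc : Type) {PState : Type}
    (D : FailurePattern Proc → Set (Proc → ℕ → Set Proc))
    (P : (ℕ → Proc → PState) → FailurePattern Proc → Prop)
    (initP : Set PState) : Prop :=
  ∃ (State Msg : Type) (A : Algorithm Proc State Msg), Solves A D P initP

/-- Problem states of strong consensus: an input value in `{0,1}` and a decision
in `{⊥,0,1}`. -/
abbrev SCState : Type := Bool × Option Bool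

/-- Initial problem states of strong consensus: no decision yet. -/
def SCinit : Set SCState := {s | s.2 = none}

/-- The strong-consensus predicate: inputs never change, decisions change at most
once and only from `⊥`, and all correct processes eventually forever decide the
input value of a single correct process (when a correct process exists). -/
def SCpred (w : ℕ → Proc → SCState) (F : FailurePattern Proc) : Prop :=
  (∀ (p : Proc) (ℓ : ℕ), (w ℓ p).1 = (w 0 p).1) ∧
  (∀ (p : Proc) (ℓ : ℕ), (w ℓ p).2 ≠ none → (w (ℓ + 1) p).2 = (w ℓ p).2) ∧
  ((correctS F).Nonempty →
    ∃ j ∈ correctS F, ∀ i ∈ correctS F, ∃ N, ∀ ℓ ≥ N, (w ℓ i).2 = some (w 0 j).1)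

/-!
Run the algorithm `A` that solves the problem with `𝒫` under the stall-on-suspect
transformation. With `ℳ` a faulty process suspects itself at its first step, so it stalls
silently forever without changing its interpreted state, while a correct process never suspects
itself and simply runs `A`. Deleting the steps of the faulty processes therefore leaves a run of
`A` in the initial crash scenario `F⁰`, where the `ℳ`-history is a `𝒫`-history. As finitely
many processes crash in finite time, only finitely many steps are deleted, so the original
interpreted run is a finite stutter of the deleted one; crash time independence moves the
problem from `F⁰` back to `F`.
-/

lemma FailurePattern.mono_le (F : FailurePattern Proc) {s t : ℕ} (h : s ≤ t) :
    F.F s ⊆ F.F t := by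
  induction t, h using Nat.le_induction with
  | base => exact subset_rfl
  | succ n _ ih => exact ih.trans (F.mono n)

lemma FailurePattern.exists_faultyS_subset [Finite Proc] (F : FailurePattern Proc) :
    ∃ t, faultyS F ⊆ F.F t := by
  have hev : ∀ p, ∀ᶠ t in Filter.atTop, p ∈ faultyS F → p ∈ F.F t := by
    intro p
    by_cases hp : p ∈ faultyS F
    · obtain ⟨t, ht⟩ : ∃ t, p ∈ F.F t := by simpa [faultyS, correctS] using hp
      exact Filter.eventually_atTop.2 ⟨t, fun s hs _ => F.mono_le hs ht⟩
    · exact .of_forall fun _ h => absurd h hp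
  obtain ⟨t, ht⟩ := (Filter.eventually_all.2 hev).exists
  exact ⟨t, fun p hp => ht p hp⟩

lemma correctS_initialScenario (F : FailurePattern Proc) :
    correctS (initialScenario F) = correctS F := by
  ext p
  simp [correctS, initialScenario, faultyS]

lemma marabout_subset_perfect_initialScenario (F : FailurePattern Proc) :
    Marabout F ⊆ Perfect (initialScenario F) := by
  intro H hH
  have hlive : ∀ t p, p ∉ (initialScenario F).F t → H p t = faultyS F := fun t p hp =>
    hH t p (not_not.1 hp t)
  refine ⟨fun q hq p hp => ⟨0, fun t _ => ?_⟩, fun t p hp q hq => ?_⟩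
  · rw [hlive t p (hp t)]
    simpa [faultyS, correctS_initialScenario] using hq
  · rwa [hlive t p hp]

def Step.map {State' : Type} (g : State → State') (s : Step Proc State Msg) :
    Step Proc State' Msg :=
  ⟨s.proc, g s.st, s.recv, s.fd, g s.st', s.send⟩

/-- Stall-on-suspect, realised on the doubled state space so that no fresh states are needed:
`Sum.inr q` is the stall state of the initial state `q`. -/
def stallOnSuspect (A : Algorithm Proc State Msg) : Algorithm Proc (State ⊕ State) Msg where
  Q _ := Set.univ
  init p := Sum.inl '' A.init p
  init_sub _ := Set.subset_univ _
  init_nonempty p := (A.init_nonempty p).image _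
  allowed := {s | (∃ a ∈ A.allowed, s = a.map Sum.inl ∧ ¬(a.st ∈ A.init a.proc ∧ a.proc ∈ a.fd)) ∨
      ∃ q ∈ A.init s.proc, (s.st = Sum.inl q ∧ s.proc ∈ s.fd ∨ s.st = Sum.inr q) ∧
        s.st' = Sum.inr q ∧ s.send = none}
  allowed_st _ _ := ⟨trivial, trivial⟩
  det := by
    rintro s (⟨a, ha, rfl, hna⟩ | ⟨q, hq, hst, hst', hsend⟩) s'
      (⟨a', ha', rfl, hna'⟩ | ⟨q', hq', hst₁, hst₁', hsend'⟩) hproc hst_eq hrecv hfd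
    · obtain ⟨h₁, h₂⟩ := A.det a ha a' ha' hproc (Sum.inl.inj hst_eq) hrecv hfd
      exact ⟨congrArg Sum.inl h₁, h₂⟩
    · rcases hst₁ with ⟨h, h'⟩ | h <;> simp_all [Step.map]
    · rcases hst with ⟨h, h'⟩ | h <;> simp_all [Step.map]
    · obtain rfl : q = q' := by
        rcases hst with ⟨h, -⟩ | h <;> rcases hst₁ with ⟨h', -⟩ | h' <;> simp_all
      exact ⟨hst'.trans hst₁'.symm, hsend.trans hsend'.symm⟩

section StallOnSuspect

variable {A : Algorithm Proc State Msg} {s : Step Proc (State ⊕ State) Msg}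

lemma stallOnSuspect_eq_map_of_notMem_fd (hs : s ∈ (stallOnSuspect A).allowed)
    (hfd : s.proc ∉ s.fd) (hst : s.st.isLeft) : ∃ a ∈ A.allowed, s = a.map Sum.inl := by
  rcases hs with ⟨a, ha, rfl, -⟩ | ⟨q, -, ⟨-, h⟩ | h, -⟩
  · exact ⟨a, ha, rfl⟩
  · exact absurd h hfd
  · simp [h] at hst

lemma stallOnSuspect_stall_of_mem_fd (hs : s ∈ (stallOnSuspect A).allowed)
    (hfd : s.proc ∈ s.fd) (hst : Sum.elim id id s.st ∈ A.init s.proc) :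
    s.st' = Sum.inr (Sum.elim id id s.st) ∧ s.send = none := by
  rcases hs with ⟨a, -, rfl, hna⟩ | ⟨q, -, ⟨h, -⟩ | h, hst', hsend⟩
  · exact absurd ⟨hst, hfd⟩ hna
  all_goals simp [h, hst', hsend]

end StallOnSuspect

section Clauses

variable (C : Set Proc) (I : Proc → State) (Φ : ℕ → Step Proc State Msg)

def Fair : Prop := ∀ p ∈ C, ∀ n : ℕ, ∃ ℓ ≥ n, (Φ ℓ).proc = p

def NoSpurious : Prop :=
  ∀ ℓ q m, (Φ ℓ).recv = some (q, m) → ∃ k < ℓ, (Φ k).proc = q ∧ (Φ k).send = some ((Φ ℓ).proc, m)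

def ReliableLinks : Prop :=
  ∀ ℓ q m, (Φ ℓ).send = some (q, m) →
    (∀ k k', ℓ < k → ℓ < k' → (Φ k).proc = q → (Φ k).recv = some ((Φ ℓ).proc, m) →
      (Φ k').proc = q → (Φ k').recv = some ((Φ ℓ).proc, m) → k = k') ∧
    (q ∈ C → ∃ k > ℓ, (Φ k).proc = q ∧ (Φ k).recv = some ((Φ ℓ).proc, m))

def StartsFrom : Prop := ∀ ℓ, (∀ k < ℓ, (Φ k).proc ≠ (Φ ℓ).proc) → (Φ ℓ).st = I (Φ ℓ).proc

def ChainsStates : Prop :=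
  ∀ ℓ k, ℓ < k → (Φ k).proc = (Φ ℓ).proc →
    (∀ j, ℓ < j → j < k → (Φ j).proc ≠ (Φ ℓ).proc) → (Φ k).st = (Φ ℓ).st'

end Clauses

section Runs

variable {A : Algorithm Proc State Msg} {D : FailurePattern Proc → Set (Proc → ℕ → Set Proc)}
  {F : FailurePattern Proc} {H : Proc → ℕ → Set Proc} {I : Proc → State}
  {Φ : ℕ → Step Proc State Msg} {T : ℕ → ℕ}

lemma configAt_succ (n : ℕ) (p : Proc) :
    configAt I Φ (n + 1) p = if (Φ n).proc = p then (Φ n).st' else configAt I Φ n p := rfl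

lemma configAt_eq_of_forall_ne {p : Proc} {m n : ℕ} (hmn : m ≤ n)
    (h : ∀ k, m ≤ k → k < n → (Φ k).proc ≠ p) : configAt I Φ n p = configAt I Φ m p := by
  induction n, hmn using Nat.le_induction with
  | base => rfl
  | succ n hmn ih =>
    rw [configAt_succ, if_neg (h n hmn n.lt_succ_self),
      ih fun k hk hkn => h k hk (hkn.trans n.lt_succ_self)]

lemma validRun_iff : ValidRun A D F H I Φ T ↔
    StrictMono T ∧ H ∈ D F ∧ (∀ p, I p ∈ A.init p) ∧ Fair (correctS F) Φ ∧
    (∀ ℓ, Φ ℓ ∈ A.allowed) ∧ (∀ ℓ, (Φ ℓ).proc ∉ F.F (T ℓ)) ∧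
    (∀ ℓ, (Φ ℓ).fd = H (Φ ℓ).proc (T ℓ)) ∧ NoSpurious Φ ∧ ReliableLinks (correctS F) Φ ∧
    StartsFrom I Φ ∧ ChainsStates Φ :=
  Iff.rfl

lemma StartsFrom.st_eq_configAt (hfirst : StartsFrom I Φ) (hchain : ChainsStates Φ) (n : ℕ) :
    (Φ n).st = configAt I Φ n (Φ n).proc := by
  by_cases hex : ∃ k < n, (Φ k).proc = (Φ n).proc
  · obtain ⟨k, hk⟩ := hex
    set P : ℕ → Prop := fun k => k < n ∧ (Φ k).proc = (Φ n).proc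
    set last := Nat.findGreatest P n
    have hlast : P last := Nat.findGreatest_spec hk.1.le hk
    have hgap : ∀ j, last < j → j < n → (Φ j).proc ≠ (Φ n).proc := fun j hj hjn hjp =>
      Nat.findGreatest_is_greatest hj hjn.le ⟨hjn, hjp⟩
    rw [hchain last n hlast.1 hlast.2.symm (by rwa [hlast.2]),
      configAt_eq_of_forall_ne hlast.1 fun j hj hjn => hgap j hj hjn, configAt_succ,
      if_pos hlast.2]
  · push Not at hex
    rw [hfirst n hex, configAt_eq_of_forall_ne n.zero_le fun k _ hk => hex k hk]
    rfl

lemma ValidRun.fd_eq_faultyS (hrun : ValidRun A Marabout F H I Φ T) (ℓ : ℕ) :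
    (Φ ℓ).fd = faultyS F := by
  obtain ⟨-, hH, -, -, -, hlive, hfd, -⟩ := validRun_iff.1 hrun
  rw [hfd, hH _ _ (hlive ℓ)]

lemma ValidRun.exists_forall_ge_proc_notMem_faultyS [Finite Proc]
    (hrun : ValidRun A D F H I Φ T) : ∃ N, ∀ n ≥ N, (Φ n).proc ∉ faultyS F := by
  obtain ⟨hT, -, -, -, -, hlive, -⟩ := validRun_iff.1 hrun
  obtain ⟨N, hN⟩ := F.exists_faultyS_subset
  exact ⟨N, fun n hn hfaulty => hlive n (F.mono_le (hn.trans hT.le_apply) (hN hfaulty))⟩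

end Runs

section Deletion

variable {bad : Set Proc} {Φt Φ : ℕ → Step Proc State Msg} {Tt T : ℕ → ℕ} {I : Proc → State}

lemma isDeletion_nth (hinf : {n | (Φt n).proc ∉ bad}.Infinite) :
    IsDeletion bad Φt Tt (fun ℓ => Φt (Nat.nth (fun n => (Φt n).proc ∉ bad) ℓ))
      (fun ℓ => Tt (Nat.nth (fun n => (Φt n).proc ∉ bad) ℓ)) :=
  ⟨_, Nat.nth_strictMono hinf, Nat.nth_mem_of_infinite hinf, fun _ hn => ⟨_, Nat.nth_count hn⟩,
    fun _ => rfl, fun _ => rfl⟩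

namespace IsDeletion

variable (hdel : IsDeletion bad Φt Tt Φ T)
include hdel

lemma strictMono (hT : StrictMono Tt) : StrictMono T := by
  obtain ⟨e, he, -, -, -, hTe⟩ := hdel
  exact fun ℓ ℓ' h => by simpa only [hTe] using hT (he h)

lemma forall_step {Q : Step Proc State Msg → ℕ → Prop}
    (hQ : ∀ n, (Φt n).proc ∉ bad → Q (Φt n) (Tt n)) (ℓ : ℕ) : Q (Φ ℓ) (T ℓ) := by
  obtain ⟨e, -, hkept, -, hΦe, hTe⟩ := hdel
  simpa only [hΦe, hTe] using hQ (e ℓ) (hkept ℓ)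

lemma fair {C : Set Proc} (hfair : Fair C Φt) (hC : ∀ p ∈ C, p ∉ bad) : Fair C Φ := by
  obtain ⟨e, he, -, hsurj, hΦe, -⟩ := hdel
  intro p hp n
  obtain ⟨k, hk, rfl⟩ := hfair p hp (e n)
  obtain ⟨ℓ, rfl⟩ := hsurj k (hC _ hp)
  exact ⟨ℓ, he.le_iff_le.1 hk, by rw [hΦe]⟩

lemma noSpurious (hspur : NoSpurious Φt) (hsilent : ∀ n, (Φt n).proc ∈ bad → (Φt n).send = none) :
    NoSpurious Φ := by
  obtain ⟨e, he, -, hsurj, hΦe, -⟩ := hdel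
  intro ℓ q m hrecv
  rw [hΦe] at hrecv ⊢
  obtain ⟨k, hk, hkq, hks⟩ := hspur (e ℓ) q m hrecv
  obtain ⟨j, rfl⟩ := hsurj k fun hbad => by simp [hsilent k hbad] at hks
  exact ⟨j, he.lt_iff_lt.1 hk, by rwa [hΦe], by rwa [hΦe]⟩

lemma reliableLinks {C : Set Proc} (hrel : ReliableLinks C Φt) (hC : ∀ p ∈ C, p ∉ bad) :
    ReliableLinks C Φ := by
  obtain ⟨e, he, -, hsurj, hΦe, -⟩ := hdel
  intro ℓ q m hsend
  simp only [hΦe] at hsend ⊢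
  obtain ⟨huniq, hdeliv⟩ := hrel (e ℓ) q m hsend
  refine ⟨fun k k' hk hk' hkq hkr hkq' hkr' =>
    he.injective (huniq (e k) (e k') (he hk) (he hk') hkq hkr hkq' hkr'), fun hq => ?_⟩
  obtain ⟨k, hk, rfl, hkr⟩ := hdeliv hq
  obtain ⟨j, rfl⟩ := hsurj k (hC _ hq)
  exact ⟨j, he.lt_iff_lt.1 hk, rfl, hkr⟩

lemma startsFrom (hstart : StartsFrom I Φt) : StartsFrom I Φ := by
  obtain ⟨e, he, hkept, hsurj, hΦe, -⟩ := hdel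
  intro ℓ hfirst
  simp only [hΦe] at hfirst ⊢
  refine hstart (e ℓ) fun k hk hkp => ?_
  obtain ⟨j, rfl⟩ := hsurj k (hkp ▸ hkept ℓ)
  exact hfirst j (he.lt_iff_lt.1 hk) hkp

lemma chainsStates (hchain : ChainsStates Φt) : ChainsStates Φ := by
  obtain ⟨e, he, hkept, hsurj, hΦe, -⟩ := hdel
  intro ℓ k hlk hkp hgap
  simp only [hΦe] at hkp hgap ⊢
  refine hchain (e ℓ) (e k) (he hlk) hkp fun i hi hik hip => ?_
  obtain ⟨j, rfl⟩ := hsurj i (hip ▸ hkept ℓ)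
  exact hgap j (he.lt_iff_lt.1 hi) (he.lt_iff_lt.1 hik) hip

end IsDeletion

end Deletion

section Interpretation

variable {I : Proc → State} {Φ : ℕ → Step Proc State Msg}

lemma StartsFrom.map {State' : Type} (g : State → State') (h : StartsFrom I Φ) :
    StartsFrom (fun p => g (I p)) (fun ℓ => (Φ ℓ).map g) :=
  fun ℓ hfirst => congrArg g (h ℓ hfirst)

lemma ChainsStates.map {State' : Type} (g : State → State') (h : ChainsStates Φ) :
    ChainsStates (fun ℓ => (Φ ℓ).map g) :=
  fun ℓ k hlk hkp hgap => congrArg g (h ℓ k hlk hkp hgap)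

lemma configAt_map {State' : Type} (g : State → State') (n : ℕ) :
    configAt (fun p => g (I p)) (fun ℓ => (Φ ℓ).map g) n = fun p => g (configAt I Φ n p) := by
  induction n with
  | zero => rfl
  | succ n ih =>
    funext p
    simp only [configAt_succ, ih]
    exact (apply_ite g _ _ _).symm

lemma configAt_nth_count {X : Type} (kept : ℕ → Prop) [DecidablePred kept]
    (f : Proc → State → X)
    (hskip : ∀ n, ¬ kept n →
      f (Φ n).proc (Φ n).st' = f (Φ n).proc (configAt I Φ n (Φ n).proc)) (n : ℕ) (p : Proc) :
    f p (configAt I (fun ℓ => Φ (Nat.nth kept ℓ)) (Nat.count kept n) p) =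
      f p (configAt I Φ n p) := by
  induction n with
  | zero => rfl
  | succ n ih =>
    by_cases hn : kept n
    · rw [Nat.count_succ, if_pos hn, configAt_succ, configAt_succ, Nat.nth_count hn]
      split_ifs
      · rfl
      · exact ih
    · rw [Nat.count_succ, if_neg hn, add_zero, ih, configAt_succ]
      split_ifs with hp
      · subst hp
        exact (hskip n hn).symm
      · rfl

lemma stutter_comp (w : ℕ → Proc → PState) {c : ℕ → ℕ} (h0 : c 0 = 0)
    (hstep : ∀ n, c (n + 1) = c n ∨ c (n + 1) = c n + 1) {N : ℕ}
    (hN : ∀ n ≥ N, c (n + 1) = c n + 1) : Stutter w (fun n => w (c n)) := by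
  induction N generalizing c with
  | zero =>
    obtain rfl : c = id := funext fun n => by
      induction n with
      | zero => exact h0
      | succ n ih => rw [hN n n.zero_le, ih]; rfl
    exact .refl
  | succ N ih =>
    rcases hstep N with hflat | hup
    · -- `c` repeats `c N` at `N + 1`; `c'` skips that index
      set c' : ℕ → ℕ := fun n => c (if n ≤ N then n else n + 1)
      have hc'_le : ∀ n ≤ N, c' n = c n := fun n hn => by simp [c', hn]
      have hc'_ge : ∀ n ≥ N, c' n = c (n + 1) := fun n hn => by
        rcases hn.eq_or_lt with rfl | hlt
        · simp [c', hflat]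
        · simp [c', hlt.not_ge]
      refine .tail (b := fun n => w (c' n)) (ih (c := c') ?_ ?_ ?_) ⟨N, ?_, ?_, ?_⟩
      · simp [c', h0]
      · intro n
        rcases lt_or_ge n N with h | h
        · rw [hc'_le n h.le, hc'_le (n + 1) h]
          exact hstep n
        · rw [hc'_ge n h, hc'_ge (n + 1) (by omega)]
          exact hstep (n + 1)
      · intro n hn
        rw [hc'_ge n hn, hc'_ge (n + 1) (by omega)]
        exact hN (n + 1) (by omega)
      · intro k hk
        simp only [hc'_le k hk]
      · intro p
        left
        simp only [hc'_le N le_rfl, hflat]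
      · intro k hk
        simp only [hc'_ge k hk.le]
    · exact ih h0 hstep fun n hn => hn.eq_or_lt.elim (fun h => h ▸ hup) (hN n)

end Interpretation

section MaraboutRuns

variable {A : Algorithm Proc State Msg} {F : FailurePattern Proc} {H : Proc → ℕ → Set Proc}
  {I : Proc → State ⊕ State} {Φ : ℕ → Step Proc (State ⊕ State) Msg} {T : ℕ → ℕ}

lemma ValidRun.stallOnSuspect_configAt (hrun : ValidRun (stallOnSuspect A) Marabout F H I Φ T)
    (n : ℕ) (p : Proc) :
    (p ∉ faultyS F → (configAt I Φ n p).isLeft) ∧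
      (p ∈ faultyS F → Sum.elim id id (configAt I Φ n p) ∈ A.init p) := by
  obtain ⟨-, -, hI, -, hall, -, -, -, -, hstart, hchain⟩ := validRun_iff.1 hrun
  induction n generalizing p with
  | zero =>
    obtain ⟨q, hq, hqI⟩ := hI p
    simp [configAt, ← hqI, hq]
  | succ n ih =>
    rw [configAt_succ]
    split_ifs with hp
    · subst hp
      have hst := hstart.st_eq_configAt hchain n
      refine ⟨fun hc => ?_, fun hf => ?_⟩
      · obtain ⟨a, -, ha⟩ := stallOnSuspect_eq_map_of_notMem_fd (hall n)
          (by rwa [hrun.fd_eq_faultyS]) (hst ▸ (ih _).1 hc)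
        rw [ha]
        rfl
      · have hinit := (ih _).2 hf
        rw [(stallOnSuspect_stall_of_mem_fd (hall n) (by rwa [hrun.fd_eq_faultyS])
          (hst ▸ hinit)).1, hst]
        exact hinit
    · exact ih p

lemma ValidRun.stallOnSuspect_step_of_notMem_faultyS
    (hrun : ValidRun (stallOnSuspect A) Marabout F H I Φ T) {n : ℕ}
    (hn : (Φ n).proc ∉ faultyS F) : ∃ a ∈ A.allowed, Φ n = a.map Sum.inl := by
  obtain ⟨-, -, -, -, hall, -, -, -, -, hstart, hchain⟩ := validRun_iff.1 hrun
  refine stallOnSuspect_eq_map_of_notMem_fd (hall n) (by rwa [hrun.fd_eq_faultyS]) ?_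
  rw [hstart.st_eq_configAt hchain n]
  exact (hrun.stallOnSuspect_configAt n _).1 hn

lemma ValidRun.stallOnSuspect_step_of_mem_faultyS
    (hrun : ValidRun (stallOnSuspect A) Marabout F H I Φ T) {n : ℕ}
    (hn : (Φ n).proc ∈ faultyS F) :
    (Φ n).st' = Sum.inr (Sum.elim id id (Φ n).st) ∧ (Φ n).send = none := by
  obtain ⟨-, -, -, -, hall, -, -, -, -, hstart, hchain⟩ := validRun_iff.1 hrun
  refine stallOnSuspect_stall_of_mem_fd (hall n) (by rwa [hrun.fd_eq_faultyS]) ?_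
  rw [hstart.st_eq_configAt hchain n]
  exact (hrun.stallOnSuspect_configAt n _).2 hn

lemma ValidRun.perfect_initialScenario_of_isDeletion
    (hrun : ValidRun (stallOnSuspect A) Marabout F H I Φ T)
    {Φd : ℕ → Step Proc (State ⊕ State) Msg} {Td : ℕ → ℕ}
    (hdel : IsDeletion (faultyS F) Φ T Φd Td) :
    ValidRun A Perfect (initialScenario F) H (fun p => Sum.elim id id (I p))
      (fun ℓ => (Φd ℓ).map (Sum.elim id id)) Td := by
  obtain ⟨hT, hH, hI, hfair, -, -, hfd, hspur, hrel, hstart, hchain⟩ := validRun_iff.1 hrun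
  have hC : ∀ p ∈ correctS F, p ∉ faultyS F := fun p hp hf => hf hp
  refine validRun_iff.2 ⟨hdel.strictMono hT, marabout_subset_perfect_initialScenario F hH,
    fun p => ?_, ?_, hdel.forall_step (Q := fun s _ => s.map (Sum.elim id id) ∈ A.allowed) ?_,
    hdel.forall_step (Q := fun s t => s.proc ∉ (initialScenario F).F t) fun _ hn => hn,
    hdel.forall_step (Q := fun s t => s.fd = H s.proc t) fun n _ => hfd n,
    hdel.noSpurious hspur fun _ hn => (hrun.stallOnSuspect_step_of_mem_faultyS hn).2, ?_,
    (hdel.startsFrom hstart).map _, (hdel.chainsStates hchain).map _⟩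
  · obtain ⟨q, hq, hqI⟩ := hI p
    simpa [← hqI] using hq
  · rw [correctS_initialScenario]
    exact hdel.fair hfair hC
  · intro n hn
    obtain ⟨a, ha, heq⟩ := hrun.stallOnSuspect_step_of_notMem_faultyS hn
    rw [heq]
    exact ha
  · rw [correctS_initialScenario]
    exact hdel.reliableLinks hrel hC

theorem ValidRun.exists_perfect_run_stutter [Finite Proc] (V : Proc → State → PState)
    (hrun : ValidRun (stallOnSuspect A) Marabout F H I Φ T) :
    ∃ (I' : Proc → State) (Φ' : ℕ → Step Proc State Msg) (T' : ℕ → ℕ),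
      ValidRun A Perfect (initialScenario F) H I' Φ' T' ∧
      Stutter (interpRun V I' Φ') (interpRun (fun p => V p ∘ Sum.elim id id) I Φ) := by
  set kept : ℕ → Prop := fun n => (Φ n).proc ∉ faultyS F
  obtain ⟨N, hN⟩ := hrun.exists_forall_ge_proc_notMem_faultyS
  have hinf : {n | kept n}.Infinite := (Set.Ici_infinite N).mono fun n hn => hN n hn
  refine ⟨_, _, _, hrun.perfect_initialScenario_of_isDeletion (isDeletion_nth hinf), ?_⟩
  -- a faulty step only moves from `q` or its stall state to the stall state of `q`
  have hskip : ∀ n, ¬ kept n → (V (Φ n).proc ∘ Sum.elim id id) (Φ n).st' =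
      (V (Φ n).proc ∘ Sum.elim id id) (configAt I Φ n (Φ n).proc) := fun n hn => by
    obtain ⟨hst', -⟩ := hrun.stallOnSuspect_step_of_mem_faultyS (not_not.1 hn)
    obtain ⟨-, -, -, -, -, -, -, -, -, hstart, hchain⟩ := validRun_iff.1 hrun
    simp [hst', hstart.st_eq_configAt hchain n]
  have hobs : interpRun (fun p => V p ∘ Sum.elim id id) I Φ = fun n =>
      interpRun V (fun p => Sum.elim id id (I p))
        (fun ℓ => (Φ (Nat.nth kept ℓ)).map (Sum.elim id id)) (Nat.count kept n) := by
    funext n p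
    simp only [interpRun, configAt_map]
    exact (configAt_nth_count kept (fun p => V p ∘ Sum.elim id id) hskip n p).symm
  rw [hobs]
  refine stutter_comp _ (Nat.count_zero _) (fun n => ?_) (N := N) fun n hn => ?_
  · by_cases h : kept n <;> simp [Nat.count_succ, h]
  · simp [Nat.count_succ, kept, hN n hn]

end MaraboutRuns

lemma IsInterp.stallOnSuspect {A : Algorithm Proc State Msg} {initP : Set PState}
    {V : Proc → State → PState} (hV : IsInterp A initP V) :
    IsInterp (stallOnSuspect A) initP (fun p => V p ∘ Sum.elim id id) := by
  refine ⟨fun p => Set.eq_univ_of_forall fun y => ?_, fun p => ?_⟩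
  · obtain ⟨x, -, rfl⟩ := hV.1 p ▸ Set.mem_univ y
    exact ⟨Sum.inl x, trivial, rfl⟩
  · simp [FDT.stallOnSuspect, Set.image_image, hV.2 p]

lemma IsInterp.interpRun_zero_mem {A : Algorithm Proc State Msg} {initP : Set PState}
    {V : Proc → State → PState} (hV : IsInterp A initP V)
    {D : FailurePattern Proc → Set (Proc → ℕ → Set Proc)} {F : FailurePattern Proc}
    {H : Proc → ℕ → Set Proc} {I : Proc → State} {Φ : ℕ → Step Proc State Msg} {T : ℕ → ℕ}
    (hrun : ValidRun A D F H I Φ T) (p : Proc) : interpRun V I Φ 0 p ∈ initP := by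
  obtain ⟨-, -, hI, -⟩ := validRun_iff.1 hrun
  exact hV.2 p ▸ Set.mem_image_of_mem (V p) (hI p)

theorem marabout_solvability_stronger_than_perfect_general {Proc : Type} [Fintype Proc]
    (PState : Type) (initP : Set PState) (P : TimeFreeProblem Proc PState initP)
    (h : SolvableWith Proc Perfect P.pred initP) :
    SolvableWith Proc Marabout P.pred initP := by
  obtain ⟨State, Msg, A, V, hV, hA⟩ := h
  refine ⟨State ⊕ State, Msg, stallOnSuspect A, _, hV.stallOnSuspect, fun F H I Φ T hrun => ?_⟩
  obtain ⟨I', Φ', T', hrun', hstutter⟩ := hrun.exists_perfect_run_stutter V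
  have hinit := hV.interpRun_zero_mem hrun'
  rw [← P.stutterInv _ _ F hinit hstutter, ← P.crashIndep _ _ _ hinit (correctS_initialScenario F)]
  exact hA _ H I' Φ' T' hrun'

/-- `ℳ ≽ˢ 𝒫`: every time-free problem solvable using the perfect
detector `𝒫` is also solvable using the Marabout detector `ℳ`. -/
theorem marabout_solvability_stronger_than_perfect {Proc : Type} [Fintype Proc] [Nonempty Proc]
    (PState : Type) (initP : Set PState) (P : TimeFreeProblem Proc PState initP)
    (h : SolvableWith Proc Perfect P.pred initP) :
    SolvableWith Proc Marabout P.pred initP :=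
  marabout_solvability_stronger_than_perfect_general PState initP P h

end FDT
end

section
/- Let k ∈ ℕ, let F̃ be a failure pattern and let H̃ ∈ 𝒫_{k+1}(F̃), i.e. H̃ satisfies (k+1)-completeness and (k+1)-accuracy with respect to F̃. Define the failure pattern F by F(t) = F̃(t+1) for all t, and the history H by H(p_i,t) = H̃(p_i,t+1) for all p_i and t. Then H ∈ 𝒫_k(F), i.e. H satisfies k-completeness and k-accuracy with respect to F. -/
namespace FDT

open Classical

variable {Proc State Msg PState : Type}

/-- If `H̃ ∈ 𝒫_{k+1}(F̃)` then the shifted history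
`H(p,t) = H̃(p,t+1)` satisfies `H ∈ 𝒫_k(F)` with respect to the shifted pattern
`F(t) = F̃(t+1)`. -/
theorem shifted_history_in_Pk {Proc : Type} [Fintype Proc] [Nonempty Proc] (k : ℕ)
    (Ft : FailurePattern Proc) (Ht : Proc → ℕ → Set Proc)
    (hH : Ht ∈ Pk (k + 1) Ft) :
    (fun p t => Ht p (t + 1)) ∈ Pk k (shiftPattern Ft) := by
  obtain ⟨hcomp, hacc⟩ := hH
  have hcor : correctS (shiftPattern Ft) = correctS Ft := by
    ext p
    constructor
    · intro h t
      cases t with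
      | zero => exact fun hm => h 0 (Ft.mono 0 hm)
      | succ n => exact h n
    · intro h t
      exact h (t + 1)
  constructor
  · intro p q hq1 hq2 hq3
    have hq2' : q ∈ faultyS Ft := by
      simpa [faultyS, hcor] using hq2
    have hq3' : p ∈ correctS Ft := by rwa [hcor] at hq3
    obtain ⟨t', ht'⟩ := hcomp p q hq1 hq2' hq3'
    exact ⟨t', fun t ht => ht' (t + 1) (by omega)⟩
  · intro p q t hqk hqt
    exact hacc p q (t + 1) hqk hqt

end FDT
end

section
/- Let k ∈ ℕ and let R' = ⟨F̃, H̃, I, Φ, T'⟩ be a valid run of algorithm A using 𝒫_{k+1} such that T'[ℓ] > 0 for every ℓ. Define the failure pattern F by F(t) = F̃(t+1), the history H by H(p_i,t) = H̃(p_i,t+1), and the time sequence T by T[ℓ] = T'[ℓ] − 1. Then R = ⟨F, H, I, Φ, T⟩ is a valid run of A using 𝒫_k. -/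
namespace FDT

open Classical

variable {Proc State Msg PState : Type}

/-- If `R' = ⟨F̃,H̃,I,Φ,T'⟩` is a valid run of `A` using `𝒫_{k+1}`
with `T'[ℓ] > 0` for every `ℓ`, then the time-shifted run `R = ⟨F,H,I,Φ,T⟩` with
`F(t) = F̃(t+1)`, `H(p,t) = H̃(p,t+1)`, `T[ℓ] = T'[ℓ] − 1` is a valid run of `A`
using `𝒫_k`. -/
theorem shifted_run_valid {Proc State Msg : Type} [Fintype Proc] [Nonempty Proc] (k : ℕ)
    (A : Algorithm Proc State Msg)
    (Ft : FailurePattern Proc) (Ht : Proc → ℕ → Set Proc) (I : Proc → State)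
    (Φ : ℕ → Step Proc State Msg) (T' : ℕ → ℕ)
    (hpos : ∀ ℓ, 0 < T' ℓ)
    (hrun : ValidRun A (Pk (k + 1)) Ft Ht I Φ T') :
    ValidRun A (Pk k) (shiftPattern Ft) (fun p t => Ht p (t + 1)) I Φ
      (fun ℓ => T' ℓ - 1) := by
  obtain ⟨hT, hH, hI, hinf, hall, hlive, hfd, hspur, hrel, hfirst, hnext⟩ := hrun
  have hcs : correctS (shiftPattern Ft) = correctS Ft := by
    ext p
    constructor
    · intro h t hmem
      exact h t (Ft.mono t hmem)
    · intro h t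
      exact h (t + 1)
  have hsub : ∀ ℓ, (T' ℓ - 1) + 1 = T' ℓ := fun ℓ => Nat.succ_pred_eq_of_pos (hpos ℓ)
  refine ⟨?_, ⟨?_, ?_⟩, hI, ?_, hall, ?_, ?_, hspur, ?_, hfirst, hnext⟩
  · intro a b hab
    show T' a - 1 < T' b - 1
    have := hT hab
    have := hpos a
    omega
  · intro p q hqk hqf hpc
    have hqf' : q ∈ faultyS Ft := by
      simpa only [faultyS, hcs] using hqf
    have hpc' : p ∈ correctS Ft := hcs ▸ hpc
    obtain ⟨t', ht'⟩ := hH.1 p q hqk hqf' hpc'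
    exact ⟨t', fun t ht => ht' (t + 1) (by omega)⟩
  · intro p q t hqk hqt
    exact hH.2 p q (t + 1) hqk hqt
  · intro p hp
    exact hinf p (hcs ▸ hp)
  · intro ℓ
    have := hlive ℓ
    simpa [shiftPattern, hsub ℓ] using this
  · intro ℓ
    show (Φ ℓ).fd = Ht (Φ ℓ).proc ((T' ℓ - 1) + 1)
    rw [hsub ℓ]
    exact hfd ℓ
  · intro ℓ q m hs
    exact ⟨(hrel ℓ q m hs).1, fun hq => (hrel ℓ q m hs).2 (hcs ▸ hq)⟩

end FDT
end

section
/- For every k ∈ ℕ, the failure detectors 𝒫_k and 𝒫_{k+1} are equivalent with respect to the solvability relation: 𝒫_k ≽ˢ 𝒫_{k+1} and 𝒫_{k+1} ≽ˢ 𝒫_k; that is, a time-free problem is solvable using 𝒫_k if and only if it is solvable using 𝒫_{k+1}. -/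
namespace FDT

open Classical

variable {Proc State Msg PState : Type}

/-! ### Auxiliary material for Statement 15 -/

section Statement15Aux

lemma correctS_shift (F : FailurePattern Proc) :
    correctS (shiftPattern F) = correctS F := by
  ext p
  constructor
  · intro h t
    cases t with
    | zero => exact fun hm => h 0 (F.mono 0 hm)
    | succ s => exact h s
  · exact fun h t => h (t + 1)

lemma faultyS_shift (F : FailurePattern Proc) :
    faultyS (shiftPattern F) = faultyS F := by
  unfold faultyS
  rw [correctS_shift]

lemma Pk_le {k : ℕ} {F : FailurePattern Proc} {H : Proc → ℕ → Set Proc}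
    (h : H ∈ Pk k F) : H ∈ Pk (k + 1) F := by
  obtain ⟨hc, ha⟩ := h
  exact ⟨fun p q hq => hc p q (fun hk => hq (F.mono k hk)),
    fun p q t hq => ha p q t (fun hk => hq (F.mono k hk))⟩

lemma Pk_shift {k : ℕ} {F : FailurePattern Proc} {H : Proc → ℕ → Set Proc}
    (h : H ∈ Pk (k + 1) F) :
    (fun p t => H p (t + 1)) ∈ Pk k (shiftPattern F) := by
  obtain ⟨hc, ha⟩ := h
  constructor
  · intro p q hq hfq hpq
    rw [faultyS_shift] at hfq
    rw [correctS_shift] at hpq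
    obtain ⟨t', ht'⟩ := hc p q hq hfq hpq
    exact ⟨t', fun t ht => ht' (t + 1) (by omega)⟩
  · intro p q t hq hqt
    exact ha p q (t + 1) hq hqt

/-- Embed a step into the doubled state space. -/
def mapStep (s : Step Proc State Msg) : Step Proc (State ⊕ State) Msg :=
  ⟨s.proc, Sum.inl s.st, s.recv, s.fd, Sum.inl s.st', s.send⟩

/-- Collapse the doubled state space. -/
def gSum : State ⊕ State → State := Sum.elim id id

/-- Project a step of the doubled state space back. -/
def unStep (s : Step Proc (State ⊕ State) Msg) : Step Proc State Msg :=
  ⟨s.proc, gSum s.st, s.recv, s.fd, gSum s.st', s.send⟩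

lemma unStep_mapStep (s : Step Proc State Msg) : unStep (mapStep s) = s := rfl

/-- The delay-a-step transformation of `A`, realized on the doubled state space. -/
def DelayAlg (A : Algorithm Proc State Msg) : Algorithm Proc (State ⊕ State) Msg where
  Q p := Sum.inl '' A.Q p ∪ Sum.inr '' A.init p
  init p := Sum.inr '' A.init p
  init_sub p := Set.subset_union_right
  init_nonempty p := (A.init_nonempty p).image _
  allowed := {t | (∃ s ∈ A.allowed, t = mapStep s) ∨
      (∃ q ∈ A.init t.proc, t.st = Sum.inr q ∧ t.st' = Sum.inl q ∧
        t.recv = none ∧ t.send = none)}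
  allowed_st := by
    rintro t (⟨s, hs, rfl⟩ | ⟨q, hq, h1, h2, -, -⟩)
    · exact ⟨Set.mem_union_left _ ⟨s.st, (A.allowed_st s hs).1, rfl⟩,
        Set.mem_union_left _ ⟨s.st', (A.allowed_st s hs).2, rfl⟩⟩
    · constructor
      · rw [h1]; exact Set.mem_union_right _ ⟨q, hq, rfl⟩
      · rw [h2]; exact Set.mem_union_left _ ⟨q, A.init_sub _ hq, rfl⟩
  det := by
    rintro t ht t' ht' hproc hst hrecv hfd
    rcases ht with ⟨s, hs, rfl⟩ | ⟨q, hq, h1, h2, h3, h4⟩ <;>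
      rcases ht' with ⟨s', hs', rfl⟩ | ⟨q', hq', h1', h2', h3', h4'⟩
    · simp only [mapStep, Sum.inl.injEq] at hproc hst hrecv hfd ⊢
      obtain ⟨hA, hB⟩ := A.det s hs s' hs' hproc hst hrecv hfd
      exact ⟨hA, hB⟩
    · exfalso
      rw [h1'] at hst
      simp [mapStep] at hst
    · exfalso
      rw [h1] at hst
      simp [mapStep] at hst
    · rw [h1, h1'] at hst
      obtain rfl : q = q' := Sum.inr.inj hst
      rw [h2, h2', h4, h4']
      exact ⟨rfl, rfl⟩

/-- Removing finitely many "flat" positions of a stuttering reindexing yields a stutter. -/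
lemma stutter_aux (w : ℕ → Proc → PState) :
    ∀ (m : ℕ) (S : Finset ℕ) (c : ℕ → ℕ), S.card = m → c 0 = 0 →
      (∀ n, c (n + 1) = if n ∈ S then c n else c n + 1) →
      Stutter w (fun n => w (c n)) := by
  intro m
  induction m with
  | zero =>
    intro S c hcard h0 hstep
    have hS : S = ∅ := Finset.card_eq_zero.mp hcard
    have hid : ∀ n, c n = n := by
      intro n
      induction n with
      | zero => exact h0
      | succ n ih => rw [hstep, if_neg (by simp [hS]), ih]
    have hw : (fun n => w (c n)) = w := by funext n; rw [hid]
    rw [hw]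
    exact Relation.ReflTransGen.refl
  | succ m ih =>
    intro S c hcard h0 hstep
    have hne : S.Nonempty := Finset.card_pos.mp (by omega)
    set M := S.max' hne with hM
    have hMS : M ∈ S := S.max'_mem hne
    set c' : ℕ → ℕ := fun n => if n ≤ M then c n else c n + 1 with hc'
    have hcard' : (S.erase M).card = m := by
      rw [Finset.card_erase_of_mem hMS, hcard]
      omega
    have h0' : c' 0 = 0 := by simp only [hc', if_pos (Nat.zero_le M), h0]
    have hstep' : ∀ n, c' (n + 1) = if n ∈ S.erase M then c' n else c' n + 1 := by
      intro n
      rcases lt_trichotomy n M with h | h | h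
      · have h1 : n + 1 ≤ M := h
        have h2 : n ≤ M := by omega
        have h3 : n ∈ S.erase M ↔ n ∈ S := by
          rw [Finset.mem_erase]
          exact ⟨And.right, fun hs => ⟨by omega, hs⟩⟩
        simp only [hc', if_pos h1, if_pos h2]
        rw [hstep n]
        by_cases hn : n ∈ S
        · rw [if_pos hn, if_pos (h3.mpr hn)]
        · rw [if_neg hn, if_neg (fun hcc => hn (h3.mp hcc))]
      · have h1 : ¬ (n + 1 ≤ M) := by omega
        have h2 : n ≤ M := by omega
        have hnS : n ∈ S := h ▸ hMS
        have hne' : n ∉ S.erase M := by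
          rw [Finset.mem_erase]
          exact fun hcc => hcc.1 h
        simp only [hc', if_neg h1, if_pos h2]
        rw [hstep n, if_pos hnS, if_neg hne']
      · have h1 : ¬ (n + 1 ≤ M) := by omega
        have h2 : ¬ (n ≤ M) := by omega
        have hnS : n ∉ S := fun hn => absurd (S.le_max' n hn) (by omega)
        have hnS' : n ∉ S.erase M := fun hn => hnS (Finset.mem_of_mem_erase hn)
        simp only [hc', if_neg h1, if_neg h2]
        rw [hstep n, if_neg hnS, if_neg hnS']
    refine (ih (S.erase M) c' hcard' h0' hstep').tail ?_
    refine ⟨M, ?_, ?_, ?_⟩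
    · intro kk hk
      show w (c kk) = w (c' kk)
      simp only [hc', if_pos hk]
    · intro p
      left
      show w (c (M + 1)) p = w (c' M) p
      rw [hstep M, if_pos hMS]
      simp only [hc', if_pos (le_refl M)]
    · intro kk hk
      show w (c (kk + 1)) = w (c' kk)
      have hnS : kk ∉ S := fun hn => absurd (S.le_max' kk hn) (by omega)
      rw [hstep kk, if_neg hnS]
      simp only [hc', if_neg (by omega : ¬ kk ≤ M)]

end Statement15Aux

/-- For every `k`, the failure detectors `𝒫_k` and `𝒫_{k+1}` are
equivalent with respect to the solvability relation: a time-free problem is solvable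
using `𝒫_k` iff it is solvable using `𝒫_{k+1}`. -/
theorem Pk_solvability_equivalent {Proc : Type} [Fintype Proc] [Nonempty Proc] (k : ℕ)
    (PState : Type) (initP : Set PState) (P : TimeFreeProblem Proc PState initP) :
    (SolvableWith Proc (Pk k) P.pred initP ↔ SolvableWith Proc (Pk (k + 1)) P.pred initP) := by
  constructor
  · -- hard direction: a solver using 𝒫_k yields a solver using 𝒫_{k+1}
    rintro ⟨State, Msg, A, V, hV, hruns⟩
    classical
    refine ⟨State ⊕ State, Msg, DelayAlg A, fun p s => V p (gSum s), ⟨?_, ?_⟩, ?_⟩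
    · intro p
      apply Set.eq_univ_of_univ_subset
      rw [← hV.1 p]
      rintro x ⟨q, hq, rfl⟩
      exact ⟨Sum.inl q, Set.mem_union_left _ ⟨q, hq, rfl⟩, rfl⟩
    · intro p
      rw [← hV.2 p]
      show (fun s => V p (gSum s)) '' (Sum.inr '' A.init p) = _
      rw [Set.image_image]
      rfl
    · intro F H It Φt Tt hR
      obtain ⟨hT, hH, hI, hInf, hAll, hLive, hFd, hNS, hRel, hFirst, hCont⟩ := hR
      -- basic facts about the delayed run
      have hIfirst : ∀ p, ∃ q, q ∈ A.init p ∧ It p = Sum.inr q := by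
        intro p
        obtain ⟨q, hq, hEq⟩ := hI p
        exact ⟨q, hq, hEq.symm⟩
      have hfs : ∀ n, IsFirstStep Φt n → ∃ q, q ∈ A.init (Φt n).proc ∧
          (Φt n).st = Sum.inr q ∧ (Φt n).st' = Sum.inl q ∧
          (Φt n).recv = none ∧ (Φt n).send = none ∧ It (Φt n).proc = Sum.inr q := by
        intro n hn
        obtain ⟨q0, hq0, hIt⟩ := hIfirst (Φt n).proc
        have hst : (Φt n).st = It (Φt n).proc := hFirst n hn
        rcases hAll n with ⟨s, hs, heq⟩ | ⟨q, hq, h1, h2, h3, h4⟩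
        · exfalso
          have hst2 : (Φt n).st = Sum.inl s.st := by rw [heq]; rfl
          rw [hst, hIt] at hst2
          simp at hst2
        · have hqq : q = q0 := by
            have h5 : Sum.inr (α := State) q = Sum.inr q0 := by
              rw [← h1, hst, hIt]
            exact Sum.inr.inj h5
          exact ⟨q0, hq0, by rw [hst, hIt], by rw [h2, hqq], h3, h4, hIt⟩
      have hst'inl : ∀ n, ∃ x, (Φt n).st' = Sum.inl x := by
        intro n
        rcases hAll n with ⟨s, hs, heq⟩ | ⟨q, hq, h1, h2, h3, h4⟩
        · exact ⟨s.st', by rw [heq]; rfl⟩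
        · exact ⟨q, h2⟩
      have hnfs : ∀ n, ¬ IsFirstStep Φt n → ∃ s, s ∈ A.allowed ∧ Φt n = mapStep s := by
        intro n hn
        have hex : ∃ j, j < n ∧ (Φt j).proc = (Φt n).proc := by
          unfold IsFirstStep at hn
          push_neg at hn
          obtain ⟨j, hj, hj'⟩ := hn
          exact ⟨j, hj, hj'⟩
        obtain ⟨j, hjn, hjp⟩ := hex
        have hPj : (Nat.findGreatest (fun j => j < n ∧ (Φt j).proc = (Φt n).proc) n) < n ∧
            (Φt (Nat.findGreatest (fun j => j < n ∧ (Φt j).proc = (Φt n).proc) n)).proc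
              = (Φt n).proc :=
          Nat.findGreatest_spec (P := fun j => j < n ∧ (Φt j).proc = (Φt n).proc)
            (le_of_lt hjn) ⟨hjn, hjp⟩
        set jm := Nat.findGreatest (fun j => j < n ∧ (Φt j).proc = (Φt n).proc) n with hjm
        have hmid : ∀ i, jm < i → i < n → (Φt i).proc ≠ (Φt jm).proc := by
          intro i h1 h2 hpe
          exact Nat.findGreatest_is_greatest h1 (le_of_lt h2) ⟨h2, hpe.trans hPj.2⟩
        have hstn : (Φt n).st = (Φt jm).st' := hCont jm n hPj.1 hPj.2.symm hmid
        obtain ⟨x, hx⟩ := hst'inl jm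
        rcases hAll n with ⟨s, hs, heq⟩ | ⟨q, hq, h1, h2, h3, h4⟩
        · exact ⟨s, hs, heq⟩
        · exfalso
          rw [hstn, hx] at h1
          simp at h1
      set kept : ℕ → Prop := fun n => ¬ IsFirstStep Φt n with hkeptdef
      have hfin : {n | IsFirstStep Φt n}.Finite := by
        have hinj : Set.InjOn (fun n => (Φt n).proc) {n | IsFirstStep Φt n} := by
          intro a ha b hb hab
          by_contra hne
          rcases Nat.lt_or_ge a b with h | h
          · exact hb a h hab
          · have h' : b < a := by omega
            exact ha b h' hab.symm
        exact Set.Finite.of_finite_image (Set.toFinite _) hinj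
      have hkinf : {n | kept n}.Infinite := by
        have hcompl : {n | kept n} = {n | IsFirstStep Φt n}ᶜ := rfl
        rw [hcompl]
        exact hfin.infinite_compl
      set e : ℕ → ℕ := Nat.nth kept with he_def
      have he_mono : StrictMono e := Nat.nth_strictMono hkinf
      have he_kept : ∀ ℓ, kept (e ℓ) := fun ℓ => Nat.nth_mem_of_infinite hkinf ℓ
      have he_surj : ∀ n, kept n → e (Nat.count kept n) = n := fun n h => Nat.nth_count h
      set Φ : ℕ → Step Proc State Msg := fun ℓ => unStep (Φt (e ℓ)) with hΦdef
      have hmap : ∀ ℓ, Φt (e ℓ) = mapStep (Φ ℓ) ∧ Φ ℓ ∈ A.allowed := by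
        intro ℓ
        obtain ⟨s, hs, heq⟩ := hnfs (e ℓ) (he_kept ℓ)
        have h2 : Φ ℓ = s := by
          have h3 : Φ ℓ = unStep (Φt (e ℓ)) := rfl
          rw [heq, unStep_mapStep] at h3
          exact h3
        rw [h2, heq]
        exact ⟨rfl, hs⟩
      have hproc : ∀ ℓ, (Φ ℓ).proc = (Φt (e ℓ)).proc := fun ℓ => by rw [(hmap ℓ).1]; rfl
      have hrecvE : ∀ ℓ, (Φ ℓ).recv = (Φt (e ℓ)).recv := fun ℓ => by rw [(hmap ℓ).1]; rfl
      have hfdE : ∀ ℓ, (Φ ℓ).fd = (Φt (e ℓ)).fd := fun ℓ => by rw [(hmap ℓ).1]; rfl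
      have hsendE : ∀ ℓ, (Φ ℓ).send = (Φt (e ℓ)).send := fun ℓ => by rw [(hmap ℓ).1]; rfl
      have hstE : ∀ ℓ, (Φt (e ℓ)).st = Sum.inl (Φ ℓ).st := fun ℓ => by
        rw [(hmap ℓ).1]; rfl
      have hst'E : ∀ ℓ, (Φt (e ℓ)).st' = Sum.inl (Φ ℓ).st' := fun ℓ => by
        rw [(hmap ℓ).1]; rfl
      have he_pos : ∀ ℓ, 1 ≤ Tt (e ℓ) := by
        intro ℓ
        have hk := he_kept ℓ
        have h0 : 0 < e ℓ := by
          by_contra h0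
          have hz : e ℓ = 0 := by omega
          apply hk
          intro j hj
          rw [hz] at hj
          exact absurd hj (Nat.not_lt_zero j)
        have := hT h0
        omega
      set T : ℕ → ℕ := fun ℓ => Tt (e ℓ) - 1 with hTdef
      have hT1 : ∀ ℓ, T ℓ + 1 = Tt (e ℓ) := fun ℓ => Nat.sub_add_cancel (he_pos ℓ)
      set I' : Proc → State := fun p => gSum (It p) with hI'def
      have hI'init : ∀ p, I' p ∈ A.init p := by
        intro p
        obtain ⟨q, hq, hIt⟩ := hIfirst p
        have hq2 : I' p = q := by
          show gSum (It p) = q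
          rw [hIt]
          rfl
        rw [hq2]
        exact hq
      have hcorr : correctS (shiftPattern F) = correctS F := correctS_shift F
      -- the simulated 𝒫_k run of A
      have hvalid : ValidRun A (Pk k) (shiftPattern F) (fun p t => H p (t + 1)) I' Φ T := by
        refine ⟨?_, Pk_shift hH, hI'init, ?_, fun ℓ => (hmap ℓ).2, ?_, ?_, ?_, ?_, ?_, ?_⟩
        · -- strict monotonicity of T
          intro a b h
          have h1 := hT (he_mono h)
          have h2 := he_pos a
          show Tt (e a) - 1 < Tt (e b) - 1
          omega
        · -- correct processes take infinitely many steps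
          intro p hp n
          rw [hcorr] at hp
          obtain ⟨j1, hj1, hpj1⟩ := hInf p hp (e n + 1)
          obtain ⟨j2, hj2, hpj2⟩ := hInf p hp (j1 + 1)
          have hk2 : kept j2 := by
            intro hfirst
            exact hfirst j1 (by omega) (by rw [hpj1, hpj2])
          have hsur := he_surj j2 hk2
          refine ⟨Nat.count kept j2, ?_, ?_⟩
          · have : n < Nat.count kept j2 := he_mono.lt_iff_lt.mp (by rw [hsur]; omega)
            omega
          · rw [hproc, hsur]
            exact hpj2
        · -- liveness
          intro ℓ
          show (Φ ℓ).proc ∉ F.F (T ℓ + 1)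
          rw [hT1 ℓ, hproc ℓ]
          exact hLive (e ℓ)
        · -- failure detector values
          intro ℓ
          show (Φ ℓ).fd = H (Φ ℓ).proc (T ℓ + 1)
          rw [hT1 ℓ, hproc ℓ, hfdE ℓ]
          exact hFd (e ℓ)
        · -- no spurious messages
          intro ℓ q m hr
          have hr' : (Φt (e ℓ)).recv = some (q, m) := by rw [← hrecvE]; exact hr
          obtain ⟨j, hj, hpj, hsj⟩ := hNS (e ℓ) q m hr'
          have hkj : kept j := by
            intro hfirst
            obtain ⟨q0, -, -, -, -, hs0, -⟩ := hfs j hfirst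
            rw [hs0] at hsj
            simp at hsj
          have hsur := he_surj j hkj
          refine ⟨Nat.count kept j, he_mono.lt_iff_lt.mp (by rw [hsur]; exact hj), ?_, ?_⟩
          · rw [hproc, hsur]
            exact hpj
          · rw [hsendE, hsur, hproc ℓ]
            exact hsj
        · -- reliable links
          intro ℓ q m hs
          have hs' : (Φt (e ℓ)).send = some (q, m) := by rw [← hsendE]; exact hs
          obtain ⟨huniq, hdel⟩ := hRel (e ℓ) q m hs'
          constructor
          · intro a b ha hb hpa hra hpb hrb
            have heab : e a = e b := by
              apply huniq (e a) (e b) (he_mono ha) (he_mono hb)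
              · rw [← hproc]; exact hpa
              · rw [← hrecvE, ← hproc]; exact hra
              · rw [← hproc]; exact hpb
              · rw [← hrecvE, ← hproc]; exact hrb
            exact he_mono.injective heab
          · intro hq
            rw [hcorr] at hq
            obtain ⟨j, hj, hpj, hrj⟩ := hdel hq
            have hkj : kept j := by
              intro hfirst
              obtain ⟨q0, -, -, -, hr0, -, -⟩ := hfs j hfirst
              rw [hr0] at hrj
              simp at hrj
            have hsur := he_surj j hkj
            refine ⟨Nat.count kept j, he_mono.lt_iff_lt.mp (by rw [hsur]; exact hj), ?_, ?_⟩
            · rw [hproc, hsur]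
              exact hpj
            · rw [hrecvE, hsur, hproc ℓ]
              exact hrj
        · -- first steps start from the initial configuration
          intro ℓ hno
          have hkn : kept (e ℓ) := he_kept ℓ
          have hex : ∃ j, j < e ℓ ∧ (Φt j).proc = (Φt (e ℓ)).proc := by
            have hkn' : ¬ IsFirstStep Φt (e ℓ) := hkn
            unfold IsFirstStep at hkn'
            push_neg at hkn'
            obtain ⟨j, hj, hj'⟩ := hkn'
            exact ⟨j, hj, hj'⟩
          have hexF : ∃ j, j < e ℓ ∧ (Φt j).proc = (Φt (e ℓ)).proc := hex
          set j0 := Nat.find hexF with hj0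
          obtain ⟨hj0n, hj0p⟩ : j0 < e ℓ ∧ (Φt j0).proc = (Φt (e ℓ)).proc := Nat.find_spec hexF
          have hfirst0 : IsFirstStep Φt j0 := by
            intro i hi hpe
            exact Nat.find_min hexF hi ⟨by omega, by rw [← hj0p]; exact hpe⟩
          have hmid : ∀ i, j0 < i → i < e ℓ → (Φt i).proc ≠ (Φt j0).proc := by
            intro i h1 h2 hpe
            have hnfi : ¬ IsFirstStep Φt i := by
              intro hf
              exact hf j0 h1 hpe.symm
            have hsur := he_surj i hnfi
            have ham : Nat.count kept i < ℓ := he_mono.lt_iff_lt.mp (by rw [hsur]; exact h2)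
            apply hno (Nat.count kept i) ham
            rw [hproc, hsur, hproc ℓ, hpe, hj0p]
          have hstn : (Φt (e ℓ)).st = (Φt j0).st' := hCont j0 (e ℓ) hj0n hj0p.symm hmid
          obtain ⟨q, hq, hstj0, hst'j0, -, -, hItq⟩ := hfs j0 hfirst0
          have hq1 : Sum.inl (α := State) (β := State) (Φ ℓ).st = Sum.inl q := by
            rw [← hstE, hstn, hst'j0]
          have hq2 : (Φ ℓ).st = q := Sum.inl.inj hq1
          show (Φ ℓ).st = I' (Φ ℓ).proc
          rw [hq2, hproc ℓ, ← hj0p]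
          show q = gSum (It (Φt j0).proc)
          rw [hItq]
          rfl
        · -- state continuity
          intro a b hab hpb hno
          have hmid : ∀ i, e a < i → i < e b → (Φt i).proc ≠ (Φt (e a)).proc := by
            intro i h1 h2 hpe
            have hki : kept i := fun hfirst => hfirst (e a) h1 hpe.symm
            have hsur := he_surj i hki
            have ham : a < Nat.count kept i := he_mono.lt_iff_lt.mp (by rw [hsur]; exact h1)
            have hmb : Nat.count kept i < b := he_mono.lt_iff_lt.mp (by rw [hsur]; exact h2)
            apply hno (Nat.count kept i) ham hmb
            rw [hproc, hsur, hproc a, hpe]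
          have hcc := hCont (e a) (e b) (he_mono hab)
            (by rw [← hproc, ← hproc]; exact hpb) hmid
          rw [hstE b, hst'E a] at hcc
          exact Sum.inl.inj hcc
      have hP : P.pred (interpRun V I' Φ) (shiftPattern F) :=
        hruns (shiftPattern F) _ I' Φ T hvalid
      -- configurations correspond up to stuttering
      have hnostep : ∀ n p, (∀ j, j < n → (Φt j).proc ≠ p) →
          configAt It Φt n p = It p := by
        intro n
        induction n with
        | zero => intro p _; rfl
        | succ n ih =>
          intro p h
          show (if (Φt n).proc = p then (Φt n).st' else configAt It Φt n p) = It p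
          rw [if_neg (h n (by omega))]
          exact ih p (fun j hj => h j (by omega))
      have hinv : ∀ n p, gSum (configAt It Φt n p) = configAt I' Φ (Nat.count kept n) p := by
        intro n
        induction n with
        | zero =>
          intro p
          rw [Nat.count_zero]
          rfl
        | succ n ih =>
          intro p
          by_cases hk : kept n
          · have hc : Nat.count kept (n + 1) = Nat.count kept n + 1 := by
              rw [Nat.count_succ, if_pos hk]
            have hen : e (Nat.count kept n) = n := he_surj n hk
            rw [hc]
            show gSum (if (Φt n).proc = p then (Φt n).st' else configAt It Φt n p) =
              (if (Φ (Nat.count kept n)).proc = p then (Φ (Nat.count kept n)).st'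
                else configAt I' Φ (Nat.count kept n) p)
            by_cases hp : (Φt n).proc = p
            · rw [if_pos hp, if_pos (by rw [hproc, hen]; exact hp)]
              have hx := hst'E (Nat.count kept n)
              rw [hen] at hx
              rw [hx]
              rfl
            · rw [if_neg hp, if_neg (by rw [hproc, hen]; exact hp)]
              exact ih p
          · have hfirst : IsFirstStep Φt n := not_not.mp hk
            obtain ⟨q, hq, hstn, hst'n, -, -, hItn⟩ := hfs n hfirst
            have hc : Nat.count kept (n + 1) = Nat.count kept n := by
              rw [Nat.count_succ, if_neg hk]
              omega
            rw [hc]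
            show gSum (if (Φt n).proc = p then (Φt n).st' else configAt It Φt n p) =
              configAt I' Φ (Nat.count kept n) p
            by_cases hp : (Φt n).proc = p
            · rw [if_pos hp, hst'n, ← ih p]
              have hnost : configAt It Φt n p = It p := by
                apply hnostep n p
                intro j hj hpe
                exact hfirst j hj (hpe.trans hp.symm)
              rw [hnost, ← hp, hItn]
              rfl
            · rw [if_neg hp]
              exact ih p
      have hweq : (interpRun (fun p s => V p (gSum s)) It Φt)
          = fun n => interpRun V I' Φ (Nat.count kept n) := by
        funext n p
        show V p (gSum (configAt It Φt n p)) = V p (configAt I' Φ (Nat.count kept n) p)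
        rw [hinv n p]
      have hstut : Stutter (interpRun V I' Φ)
          (interpRun (fun p s => V p (gSum s)) It Φt) := by
        rw [hweq]
        apply stutter_aux (interpRun V I' Φ) hfin.toFinset.card hfin.toFinset
          (fun n => Nat.count kept n) rfl (Nat.count_zero kept)
        intro n
        rw [Nat.count_succ]
        by_cases h : IsFirstStep Φt n
        · rw [if_pos (hfin.mem_toFinset.mpr h), if_neg (not_not.mpr h)]
          omega
        · rw [if_neg (fun hc => h (hfin.mem_toFinset.mp hc)), if_pos h]
      have h0 : ∀ p, (interpRun V I' Φ) 0 p ∈ initP := by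
        intro p
        show V p (configAt I' Φ 0 p) ∈ initP
        have hc0 : configAt I' Φ 0 p = I' p := rfl
        rw [hc0, ← hV.2 p]
        exact ⟨I' p, hI'init p, rfl⟩
      have hP2 := (P.stutterInv _ _ (shiftPattern F) h0 hstut).mp hP
      have h0' : ∀ p, (interpRun (fun p s => V p (gSum s)) It Φt) 0 p ∈ initP := by
        intro p
        rw [hweq]
        show interpRun V I' Φ (Nat.count kept 0) p ∈ initP
        rw [Nat.count_zero]
        exact h0 p
      exact (P.crashIndep _ (shiftPattern F) F h0' hcorr).mp hP2
  · -- easy direction: 𝒫_k-histories are 𝒫_{k+1}-histories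
    rintro ⟨State, Msg, A, V, hV, hruns⟩
    refine ⟨State, Msg, A, V, hV, ?_⟩
    intro F H I Φ T hR
    apply hruns F H I Φ T
    obtain ⟨h1, h2, h3⟩ := hR
    exact ⟨h1, Pk_le h2, h3⟩

end FDT
end
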